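/- Let N = (V, A, c) be a network, y, z ∈ V distinct and X ⊆ V. Then 0 ≤ φ^N_{yz}(X) ≤ λ^N_{yz}(X) ≤ min{δ^N_{yz}(X), φ^N_{yz}}. -/

import Mathlib

/-!
Networks on the complete digraph: capacities `c : V → V → ℕ` with no loops
(arcs are ordered pairs of distinct vertices; loops are given capacity 0).
-/

structure Network (V : Type*) where
  c : V → V → ℕ
  no_loop : ∀ v, c v v = 0

namespace NetFlow

variable {V : Type*} [Fintype V] [DecidableEq V]

/-- `f` is a flow from `y` to `z` in `N`. -/
def IsFlow (N : Network V) (y z : V) (f : V → V → ℕ) : Prop :=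
  (∀ u v, f u v ≤ N.c u v) ∧
  (∀ x, x ≠ y → x ≠ z → ∑ u, f u x = ∑ u, f x u)

/-- The value of a flow from `y`. -/
def flowValue (f : V → V → ℕ) (y : V) : ℤ :=
  (∑ u, (f y u : ℤ)) - ∑ u, (f u y : ℤ)

/-- The maximum flow value `φ^N_{yz}`. -/
noncomputable def maxFlowValue (N : Network V) (y z : V) : ℕ :=
  sSup {m : ℕ | ∃ f, IsFlow N y z f ∧ flowValue f y = (m : ℤ)}

/-- `f` is a maximum flow from `y` to `z` in `N`. -/
def IsMaxFlow (N : Network V) (y z : V) (f : V → V → ℕ) : Prop :=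
  IsFlow N y z f ∧ flowValue f y = (maxFlowValue N y z : ℤ)

/-- The network `N_X`: capacities of arcs incident to `X` are set to zero. -/
def removeVerts (N : Network V) (X : Finset V) : Network V where
  c u v := if u ∈ X ∨ v ∈ X then 0 else N.c u v
  no_loop v := by simp [N.no_loop v]

/-- `φ^N_{yz}(X) = φ^N_{yz} - φ^{N_X}_{yz}`. -/
noncomputable def phiDrop (N : Network V) (y z : V) (X : Finset V) : ℤ :=
  (maxFlowValue N y z : ℤ) - (maxFlowValue (removeVerts N X) y z : ℤ)

/-- The (consecutive) arcs of a list of vertices. -/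
def pathArcs (p : List V) : List (V × V) := p.zip p.tail

/-- `p` is a path from `y` to `z` in `N`: at least two distinct vertices, starting at `y`,
ending at `z`, with all consecutive arcs of positive capacity. -/
def IsPath (N : Network V) (y z : V) (p : List V) : Prop :=
  2 ≤ p.length ∧ p.Nodup ∧ p.head? = some y ∧ p.getLast? = some z ∧
    p.Chain' fun u v => 1 ≤ N.c u v

/-- `p` is a cycle in `N`. -/
def IsCycle (N : Network V) (p : List V) : Prop :=
  3 ≤ p.length ∧ p.dropLast.Nodup ∧ p.head? = p.getLast? ∧
    p.Chain' fun u v => 1 ≤ N.c u v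

/-- A sequence of arc-disjoint paths from `y` to `z` in `N`: each component is a path, and
each arc `a` is used by at most `c a` components. -/
def IsPathSeq (N : Network V) (y z : V) (γ : List (List V)) : Prop :=
  (∀ p ∈ γ, IsPath N y z p) ∧
  ∀ u v : V, γ.countP (fun p => decide ((u, v) ∈ pathArcs p)) ≤ N.c u v

/-- `λ^N_{yz}`: the maximum length of a sequence of arc-disjoint paths from `y` to `z`. -/
noncomputable def maxSeqLen (N : Network V) (y z : V) : ℕ :=
  sSup {m : ℕ | ∃ γ : List (List V), IsPathSeq N y z γ ∧ γ.length = m}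

/-- `M^N_{yz}`: the sequences of arc-disjoint paths from `y` to `z` of maximum length. -/
def MaxSeqs (N : Network V) (y z : V) : Set (List (List V)) :=
  {γ | IsPathSeq N y z γ ∧ γ.length = maxSeqLen N y z}

/-- `l_X(γ)`: the number of components of `γ` having a vertex in `X`. -/
def lX (X : Finset V) (γ : List (List V)) : ℕ :=
  γ.countP fun p => p.any fun x => decide (x ∈ X)

/-- `λ^N_{yz}(X)`: the minimum of `l_X` over maximum-length sequences of arc-disjoint paths. -/
noncomputable def lambdaX (N : Network V) (y z : V) (X : Finset V) : ℕ :=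
  sInf {n : ℕ | ∃ γ ∈ MaxSeqs N y z, lX X γ = n}

/-- The flow through a vertex: `f(x) = Σ_{a exiting x} f(a)` if `x ∉ {y,z}`, `v(f)` otherwise. -/
def vertexFlow (f : V → V → ℕ) (y z x : V) : ℤ :=
  if x = y ∨ x = z then flowValue f y else ∑ u, (f x u : ℤ)

/-- `δ^N_{yz}(X)`: the minimum of `f(X) = Σ_{x∈X} f(x)` over maximum flows `f`. -/
noncomputable def deltaX (N : Network V) (y z : V) (X : Finset V) : ℕ :=
  sInf {n : ℕ | ∃ f, IsMaxFlow N y z f ∧ (∑ x ∈ X, vertexFlow f y z x) = (n : ℤ)}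

/-- The flow `f_γ` associated with a sequence of arc-disjoint paths. -/
def seqFlow (γ : List (List V)) (u v : V) : ℕ :=
  γ.countP fun p => decide ((u, v) ∈ pathArcs p)

/-- The path (or cycle) function `χ_p` of a path or cycle `p`. -/
def chi (p : List V) (u v : V) : ℕ := (pathArcs p).count (u, v)

/-- `(γ, w)` is a decomposition of the flow `f`: `γ` is a sequence of `v(f)` paths from `y`
to `z`, `w` a sequence of cycles, and `f = Σ_j χ_{γ_j} + Σ_j χ_{w_j}`. -/
def IsDecomposition (N : Network V) (y z : V) (f : V → V → ℕ)
    (γ w : List (List V)) : Prop :=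
  (∀ p ∈ γ, IsPath N y z p) ∧ (∀ q ∈ w, IsCycle N q) ∧
  (γ.length : ℤ) = flowValue f y ∧
  ∀ u v : V, f u v = (γ.map fun p => chi p u v).sum + (w.map fun q => chi q u v).sum

/-- The forward arcs of a generalized path given by vertices `p` and directions `d`. -/
def forwardArcs (p : List V) (d : List Bool) : List (V × V) :=
  ((p.zip p.tail).zip d).filterMap fun e => if e.2 then some e.1 else none

/-- The backward arcs of a generalized path given by vertices `p` and directions `d`. -/
def backwardArcs (p : List V) (d : List Bool) : List (V × V) :=
  ((p.zip p.tail).zip d).filterMap fun e => if e.2 then none else some (e.1.2, e.1.1)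

/-- `(p, d)` is a generalized path from `y` to `z`: distinct vertices `x_1 = y, …, x_m = z`
(`m ≥ 2`), the `i`-th arc being `(x_i, x_{i+1})` (forward, `d_i = true`) or `(x_{i+1}, x_i)`
(backward, `d_i = false`). -/
def IsGenPath (y z : V) (p : List V) (d : List Bool) : Prop :=
  2 ≤ p.length ∧ p.Nodup ∧ p.head? = some y ∧ p.getLast? = some z ∧
    d.length + 1 = p.length

/-- `(p, d)` is an augmenting path for `f` from `y` to `z` in `N`. -/
def IsAugPath (N : Network V) (y z : V) (f : V → V → ℕ)
    (p : List V) (d : List Bool) : Prop :=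
  IsGenPath y z p d ∧
  (∀ a ∈ forwardArcs p d, f a.1 a.2 < N.c a.1 a.2) ∧
  (∀ a ∈ backwardArcs p d, 1 ≤ f a.1 a.2)

/-- `χ_σ` for a generalized path `σ = (p, d)`: `+1` on forward arcs, `-1` on backward arcs. -/
def chiGen (p : List V) (d : List Bool) (u v : V) : ℤ :=
  ((forwardArcs p d).count (u, v) : ℤ) - ((backwardArcs p d).count (u, v) : ℤ)

/-- The full flow vitality group centrality measure `φ^N(X)`. -/
noncomputable def phiGC (N : Network V) (X : Finset V) : ℝ :=
  ∑ a ∈ Finset.univ.filter (fun a : V × V => a.1 ≠ a.2 ∧ 0 < maxFlowValue N a.1 a.2),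
    (phiDrop N a.1 a.2 X : ℝ) / (maxFlowValue N a.1 a.2 : ℝ)

/-- The full flow betweenness group centrality measure `λ^N(X)`. -/
noncomputable def lambdaGC (N : Network V) (X : Finset V) : ℝ :=
  ∑ a ∈ Finset.univ.filter (fun a : V × V => a.1 ≠ a.2 ∧ 0 < maxFlowValue N a.1 a.2),
    (lambdaX N a.1 a.2 X : ℝ) / (maxFlowValue N a.1 a.2 : ℝ)

end NetFlow

/-!
Flow decomposition: a flow of value `n` contains `n` arc-disjoint `y`–`z` paths. Indeed, if `z`
were not reachable from `y` along arcs of positive flow, the reachable set would be a cut that no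
flow leaves, forcing the value to be `0`; so there is a path, and subtracting it leaves a flow of
value `n - 1`. Conversely `n` arc-disjoint paths form a flow of value `n`, so `λ^N_{yz} = φ^N_{yz}`
and `M^N_{yz}` consists of sequences of `φ^N_{yz}` paths.

Take `γ ∈ M^N_{yz}` with `l_X(γ) = λ^N_{yz}(X)`: its components avoiding `X` are arc-disjoint in
`N_X`, whence `φ^N_{yz} - λ^N_{yz}(X) ≤ φ^{N_X}_{yz}`. Take a maximum flow `f` with
`f(X) = δ^N_{yz}(X)` and decompose it: if `y` or `z` lies in `X`, every path meets `X` and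
`f(X) ≥ v(f)`; otherwise each path meeting `X` leaves some vertex of `X` along one of its arcs,
which `f` counts in `f(X)`.
-/

namespace NetFlow

variable {V : Type*}

theorem map_fst_pathArcs (p : List V) : (pathArcs p).map Prod.fst = p.dropLast := by
  induction p using List.twoStepInduction <;> simp_all [pathArcs]

theorem map_snd_pathArcs (p : List V) : (pathArcs p).map Prod.snd = p.tail :=
  List.map_snd_zip (by cases p <;> simp)

theorem fst_mem_of_mem_pathArcs {p : List V} {a : V × V} (h : a ∈ pathArcs p) : a.1 ∈ p :=
  (List.of_mem_zip h).1

theorem snd_mem_of_mem_pathArcs {p : List V} {a : V × V} (h : a ∈ pathArcs p) : a.2 ∈ p :=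
  List.mem_of_mem_tail (List.of_mem_zip h).2

theorem nodup_pathArcs {p : List V} (h : p.Nodup) : (pathArcs p).Nodup :=
  .of_map Prod.fst (map_fst_pathArcs p ▸ h.sublist p.dropLast_sublist)

theorem isChain_iff_forall_mem_pathArcs {R : V → V → Prop} {p : List V} :
    p.IsChain R ↔ ∀ a ∈ pathArcs p, R a.1 a.2 := by
  induction p using List.twoStepInduction <;> simp_all [pathArcs]

theorem IsPath.head_mem {N : Network V} {y z : V} {p : List V} (hp : IsPath N y z p) : y ∈ p :=
  List.mem_of_mem_head? hp.2.2.1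

theorem IsPath.last_mem {N : Network V} {y z : V} {p : List V} (hp : IsPath N y z p) : z ∈ p :=
  List.mem_of_mem_getLast? hp.2.2.2.1

theorem exists_nodup_isChain_of_reflTransGen {α : Type*} {R : α → α → Prop} {a b : α}
    (h : Relation.ReflTransGen R a b) :
    ∃ p : List α, p.Nodup ∧ p.head? = some a ∧ p.getLast? = some b ∧ p.IsChain R := by
  induction h with
  | refl => exact ⟨[a], List.nodup_singleton a, rfl, rfl, List.isChain_singleton a⟩
  | @tail b c _ hbc ih =>
    obtain ⟨p, hnd, hhead, hlast, hchain⟩ := ih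
    by_cases hc : c ∈ p
    · obtain ⟨s, t, rfl⟩ := List.append_of_mem hc
      rw [← List.singleton_append, ← List.append_assoc] at hnd hchain
      refine ⟨s ++ [c], hnd.of_append_left, ?_, by simp, (List.isChain_append.1 hchain).1⟩
      cases s <;> simpa using hhead
    · refine ⟨p ++ [c], ?_, ?_, by simp, List.isChain_append.2 ⟨hchain, by simp, ?_⟩⟩
      · simpa [List.nodup_append, hnd] using fun x hx => ne_of_mem_of_not_mem hx hc
      · cases p <;> simp_all
      · simpa [hlast] using hbc

section

variable [DecidableEq V]

theorem chi_eq_ite {p : List V} (hp : p.Nodup) (u v : V) :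
    chi p u v = if (u, v) ∈ pathArcs p then 1 else 0 :=
  (nodup_pathArcs hp).count

theorem seqFlow_cons {p : List V} (hp : p.Nodup) (γ : List (List V)) :
    seqFlow (p :: γ) = chi p + seqFlow γ := by
  ext u v
  simp [seqFlow, List.countP_cons, chi_eq_ite hp, add_comm]

theorem IsPathSeq.filter_removeVerts {N : Network V} {y z : V} {γ : List (List V)}
    (h : IsPathSeq N y z γ) (X : Finset V) :
    IsPathSeq (removeVerts N X) y z (γ.filter fun p => !p.any fun x => decide (x ∈ X)) := by
  have havoid : ∀ p ∈ γ.filter (fun p => !p.any fun x => decide (x ∈ X)), ∀ x ∈ p, x ∉ X := by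
    intro p hp
    simpa using (List.mem_filter.1 hp).2
  refine ⟨fun p hp => ?_, fun u v => ?_⟩
  · obtain ⟨hlen, hnd, hy, hz, hchain⟩ := h.1 p (List.mem_filter.1 hp).1
    refine ⟨hlen, hnd, hy, hz, isChain_iff_forall_mem_pathArcs.2 fun a ha => ?_⟩
    have hc := isChain_iff_forall_mem_pathArcs.1 hchain a ha
    simpa [removeVerts, havoid p hp _ (fst_mem_of_mem_pathArcs ha),
      havoid p hp _ (snd_mem_of_mem_pathArcs ha)] using hc
  · simp only [removeVerts]
    split_ifs with huv
    · refine Nat.le_zero.2 (List.countP_eq_zero.2 fun p hp harc => ?_)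
      have harc : (u, v) ∈ pathArcs p := by simpa using harc
      rcases huv with hu | hv
      exacts [havoid p hp u (fst_mem_of_mem_pathArcs harc) hu,
        havoid p hp v (snd_mem_of_mem_pathArcs harc) hv]
    · exact List.filter_sublist.countP_le.trans (h.2 u v)

theorem lX_eq_length {N : Network V} {y z : V} {X : Finset V} {γ : List (List V)}
    (hγ : ∀ p ∈ γ, IsPath N y z p) (hX : y ∈ X ∨ z ∈ X) : lX X γ = γ.length := by
  refine List.countP_eq_length.2 fun p hp => ?_
  simp only [List.any_eq_true, decide_eq_true_eq]
  rcases hX with h | h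
  exacts [⟨y, (hγ p hp).head_mem, h⟩, ⟨z, (hγ p hp).last_mem, h⟩]

end

section

variable [Fintype V]

-- Read at an arbitrary vertex `x`, `flowValue f x` is the net outflow of `f` at `x`.
theorem flowValue_add (f g : V → V → ℕ) (x : V) :
    flowValue (f + g) x = flowValue f x + flowValue g x := by
  simp only [flowValue, Pi.add_apply, Nat.cast_add, Finset.sum_add_distrib]
  ring

theorem flowValue_sub {f g : V → V → ℕ} (h : g ≤ f) (x : V) :
    flowValue (f - g) x = flowValue f x - flowValue g x := by
  rw [eq_sub_iff_add_eq, ← flowValue_add, tsub_add_cancel_of_le h]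

theorem isFlow_iff {N : Network V} {y z : V} {f : V → V → ℕ} :
    IsFlow N y z f ↔
      (∀ u v, f u v ≤ N.c u v) ∧ ∀ x, x ≠ y → x ≠ z → flowValue f x = 0 := by
  simp only [IsFlow, flowValue, ← Nat.cast_sum, sub_eq_zero, Nat.cast_inj, @eq_comm ℕ]

theorem IsFlow.flowValue_le {N : Network V} {y z : V} {f : V → V → ℕ} (hf : IsFlow N y z f) :
    flowValue f y ≤ ∑ u, (N.c y u : ℤ) := by
  have hout : ∑ u, (f y u : ℤ) ≤ ∑ u, (N.c y u : ℤ) :=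
    Finset.sum_le_sum fun u _ => Nat.cast_le.2 (hf.1 y u)
  have hin : 0 ≤ ∑ u, (f u y : ℤ) := by positivity
  unfold flowValue
  linarith

theorem bddAbove_flowValues (N : Network V) (y z : V) :
    BddAbove {m : ℕ | ∃ f, IsFlow N y z f ∧ flowValue f y = m} := by
  refine ⟨∑ u, N.c y u, ?_⟩
  rintro m ⟨f, hf, hv⟩
  exact_mod_cast hv ▸ hf.flowValue_le

theorem le_maxFlowValue {N : Network V} {y z : V} {f : V → V → ℕ} {m : ℕ}
    (hf : IsFlow N y z f) (hv : flowValue f y = m) : m ≤ maxFlowValue N y z :=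
  le_csSup (bddAbove_flowValues N y z) ⟨f, hf, hv⟩

theorem exists_isMaxFlow (N : Network V) (y z : V) : ∃ f, IsMaxFlow N y z f := by
  refine Nat.sSup_mem ?_ (bddAbove_flowValues N y z)
  exact ⟨0, 0, ⟨fun _ _ => Nat.zero_le _, fun _ _ _ => rfl⟩, by simp [flowValue]⟩

theorem maxFlowValue_mono {N N' : Network V} (h : ∀ u v, N.c u v ≤ N'.c u v) (y z : V) :
    maxFlowValue N y z ≤ maxFlowValue N' y z := by
  obtain ⟨f, hf, hv⟩ := exists_isMaxFlow N y z
  exact le_maxFlowValue ⟨fun u v => (hf.1 u v).trans (h u v), hf.2⟩ hv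

end

variable [Fintype V] [DecidableEq V]

theorem sum_flowValue_eq_cut (f : V → V → ℕ) (S : Finset V) :
    ∑ x ∈ S, flowValue f x =
      ∑ x ∈ S, ∑ u ∈ Sᶜ, (f x u : ℤ) - ∑ x ∈ S, ∑ u ∈ Sᶜ, (f u x : ℤ) := by
  simp only [flowValue, Finset.sum_sub_distrib, ← Finset.sum_add_sum_compl S,
    Finset.sum_add_distrib]
  rw [Finset.sum_comm (s := S) (t := S)]
  ring

theorem IsFlow.flowValue_le_sum_cut {N : Network V} {y z : V} {f : V → V → ℕ}
    (hf : IsFlow N y z f) {S : Finset V} (hy : y ∈ S) (hz : z ∉ S) :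
    flowValue f y ≤ ∑ x ∈ S, ∑ u ∈ Sᶜ, (f x u : ℤ) := by
  have hS : ∑ x ∈ S, flowValue f x = flowValue f y :=
    Finset.sum_eq_single_of_mem y hy fun x hx hxy =>
      (isFlow_iff.1 hf).2 x hxy (ne_of_mem_of_not_mem hx hz)
  have hin : 0 ≤ ∑ x ∈ S, ∑ u ∈ Sᶜ, (f u x : ℤ) := by positivity
  linarith [sum_flowValue_eq_cut f S]

theorem maxFlowValue_removeVerts_le (N : Network V) (X : Finset V) (y z : V) :
    maxFlowValue (removeVerts N X) y z ≤ maxFlowValue N y z :=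
  maxFlowValue_mono (fun u v => by simp only [removeVerts]; split_ifs <;> simp) y z

theorem sum_count_pair_left (l : List (V × V)) (x : V) :
    ∑ u, l.count (x, u) = (l.map Prod.fst).count x := by
  induction l with
  | nil => simp
  | cons a l ih =>
    by_cases h : a.1 = x <;> simp [List.count_cons, Finset.sum_add_distrib, ih, Prod.ext_iff, h]

theorem sum_count_pair_right (l : List (V × V)) (x : V) :
    ∑ u, l.count (u, x) = (l.map Prod.snd).count x := by
  induction l with
  | nil => simp
  | cons a l ih =>
    by_cases h : a.2 = x <;> simp [List.count_cons, Finset.sum_add_distrib, ih, Prod.ext_iff, h]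

theorem sum_chi_left (p : List V) (x : V) : ∑ u, chi p x u = p.dropLast.count x := by
  simp only [chi, sum_count_pair_left, map_fst_pathArcs]

theorem sum_chi_right (p : List V) (x : V) : ∑ u, chi p u x = p.tail.count x := by
  simp only [chi, sum_count_pair_right, map_snd_pathArcs]

theorem flowValue_chi {p : List V} {y z : V} (hy : p.head? = some y) (hz : p.getLast? = some z)
    (x : V) : flowValue (chi p) x = (if x = y then 1 else 0) - (if x = z then 1 else 0) := by
  have hp : p ≠ [] := by rintro rfl; simp at hy
  have hcount_tail : p.count x = p.tail.count x + if x = y then 1 else 0 := by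
    obtain ⟨t, rfl⟩ : ∃ t, p = y :: t := ⟨p.tail, (List.cons_head?_tail hy).symm⟩
    simp [List.count_cons, @eq_comm _ y]
  have hcount_dropLast : p.count x = p.dropLast.count x + if x = z then 1 else 0 := by
    rw [List.getLast?_eq_some_getLast hp, Option.some_inj] at hz
    conv_lhs => rw [← List.dropLast_append_getLast hp, hz]
    simp [List.count_singleton, @eq_comm _ z]
  simp only [flowValue, ← Nat.cast_sum, sum_chi_left, sum_chi_right]
  split_ifs at * <;> omega

theorem flowValue_seqFlow {N : Network V} {y z : V} {γ : List (List V)}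
    (hγ : ∀ p ∈ γ, IsPath N y z p) (x : V) :
    flowValue (seqFlow γ) x = γ.length * ((if x = y then 1 else 0) - (if x = z then 1 else 0)) := by
  induction γ with
  | nil => simp [flowValue, seqFlow]
  | cons p γ ih =>
    obtain ⟨-, hnd, hy, hz, -⟩ := hγ p List.mem_cons_self
    rw [seqFlow_cons hnd, flowValue_add, flowValue_chi hy hz,
      ih fun q hq => hγ q (List.mem_cons_of_mem p hq), List.length_cons]
    push_cast
    ring

theorem IsPathSeq.isFlow {N : Network V} {y z : V} {γ : List (List V)} (h : IsPathSeq N y z γ) :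
    IsFlow N y z (seqFlow γ) :=
  isFlow_iff.2 ⟨h.2, fun x hy hz => by simp [flowValue_seqFlow h.1, hy, hz]⟩

theorem IsPathSeq.length_le_maxFlowValue {N : Network V} {y z : V} (hyz : y ≠ z)
    {γ : List (List V)} (h : IsPathSeq N y z γ) : γ.length ≤ maxFlowValue N y z :=
  le_maxFlowValue h.isFlow (by simp [flowValue_seqFlow h.1, hyz])

theorem IsFlow.exists_path {N : Network V} {y z : V} {f : V → V → ℕ} (hf : IsFlow N y z f)
    (hyz : y ≠ z) (hv : 0 < flowValue f y) : ∃ p, IsPath N y z p ∧ chi p ≤ f := by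
  classical
  let R : V → V → Prop := fun u v => 1 ≤ f u v
  have hreach : Relation.ReflTransGen R y z := by
    by_contra hz
    let S := Finset.univ.filter (Relation.ReflTransGen R y ·)
    have hcut : ∑ x ∈ S, ∑ u ∈ Sᶜ, (f x u : ℤ) = 0 := by
      refine Finset.sum_eq_zero fun x hx => Finset.sum_eq_zero fun u hu => ?_
      simp only [S, Finset.mem_compl, Finset.mem_filter, Finset.mem_univ, true_and] at hx hu
      by_contra hxu
      exact hu (hx.tail (Nat.one_le_iff_ne_zero.2 (by exact_mod_cast hxu)))
    have hyS : y ∈ S := Finset.mem_filter.2 ⟨Finset.mem_univ y, .refl⟩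
    have := hf.flowValue_le_sum_cut hyS (by simpa [S] using hz)
    omega
  obtain ⟨p, hnd, hy, hz, hchain⟩ := exists_nodup_isChain_of_reflTransGen hreach
  have hlen : 2 ≤ p.length := by
    rcases p with _ | ⟨a, _ | ⟨b, t⟩⟩
    · simp at hy
    · simp_all
    · simp
  refine ⟨p, ⟨hlen, hnd, hy, hz, hchain.imp fun u v h => h.trans (hf.1 u v)⟩, fun u v => ?_⟩
  rw [chi_eq_ite hnd]
  split_ifs with h
  exacts [isChain_iff_forall_mem_pathArcs.1 hchain _ h, Nat.zero_le _]

theorem IsFlow.exists_paths {N : Network V} {y z : V} {f : V → V → ℕ} (hf : IsFlow N y z f)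
    (hyz : y ≠ z) {n : ℕ} (hv : flowValue f y = n) :
    ∃ γ, (∀ p ∈ γ, IsPath N y z p) ∧ γ.length = n ∧ seqFlow γ ≤ f := by
  induction n generalizing f with
  | zero => exact ⟨[], by simp, rfl, fun _ _ => Nat.zero_le _⟩
  | succ n ih =>
    obtain ⟨p, hp, hpf⟩ := hf.exists_path hyz (by omega)
    have hchi := flowValue_chi hp.2.2.1 hp.2.2.2.1
    have hg : IsFlow N y z (f - chi p) := by
      refine isFlow_iff.2 ⟨fun u v => (Nat.sub_le _ _).trans (hf.1 u v), fun x hxy hxz => ?_⟩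
      simp [flowValue_sub hpf, (isFlow_iff.1 hf).2 x hxy hxz, hchi, hxy, hxz]
    obtain ⟨γ, hγ, hlen, hle⟩ := ih hg (by simp [flowValue_sub hpf, hv, hchi, hyz])
    refine ⟨p :: γ, List.forall_mem_cons.2 ⟨hp, hγ⟩, by simp [hlen], ?_⟩
    rw [seqFlow_cons hp.2.1, add_comm, ← tsub_add_cancel_of_le hpf]
    exact add_le_add_left hle _

theorem IsMaxFlow.exists_isPathSeq {N : Network V} {y z : V} {f : V → V → ℕ}
    (hf : IsMaxFlow N y z f) (hyz : y ≠ z) :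
    ∃ γ, IsPathSeq N y z γ ∧ γ.length = maxFlowValue N y z ∧ seqFlow γ ≤ f := by
  obtain ⟨γ, hγ, hlen, hle⟩ := hf.1.exists_paths hyz hf.2
  exact ⟨γ, ⟨hγ, fun u v => (hle u v).trans (hf.1.1 u v)⟩, hlen, hle⟩

theorem maxSeqLen_eq_maxFlowValue (N : Network V) {y z : V} (hyz : y ≠ z) :
    maxSeqLen N y z = maxFlowValue N y z := by
  obtain ⟨f, hf⟩ := exists_isMaxFlow N y z
  obtain ⟨γ, hγ, hlen, -⟩ := hf.exists_isPathSeq hyz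
  refine IsGreatest.csSup_eq ⟨⟨γ, hγ, hlen⟩, ?_⟩
  rintro m ⟨γ, hγ, rfl⟩
  exact hγ.length_le_maxFlowValue hyz

theorem IsMaxFlow.exists_mem_maxSeqs {N : Network V} {y z : V} {f : V → V → ℕ}
    (hf : IsMaxFlow N y z f) (hyz : y ≠ z) : ∃ γ ∈ MaxSeqs N y z, seqFlow γ ≤ f := by
  obtain ⟨γ, hγ, hlen, hle⟩ := hf.exists_isPathSeq hyz
  exact ⟨γ, ⟨hγ, hlen.trans (maxSeqLen_eq_maxFlowValue N hyz).symm⟩, hle⟩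

theorem IsPathSeq.length_le_lX_add {N : Network V} {y z : V} (hyz : y ≠ z) {γ : List (List V)}
    (h : IsPathSeq N y z γ) (X : Finset V) :
    γ.length ≤ lX X γ + maxFlowValue (removeVerts N X) y z := by
  have hsplit :=
    List.length_eq_countP_add_countP (fun p => p.any fun x => decide (x ∈ X)) (l := γ)
  have hfilter := (h.filter_removeVerts X).length_le_maxFlowValue hyz
  simp only [decide_not, Bool.decide_eq_true] at hsplit
  rw [← List.countP_eq_length_filter] at hfilter
  unfold lX
  omega

theorem lX_le_sum_seqFlow {N : Network V} {y z : V} {X : Finset V} {γ : List (List V)}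
    (hγ : ∀ p ∈ γ, IsPath N y z p) (hz : z ∉ X) : lX X γ ≤ ∑ x ∈ X, ∑ u, seqFlow γ x u := by
  induction γ with
  | nil => simp [lX]
  | cons p γ ih =>
    have hp := hγ p List.mem_cons_self
    rw [lX, List.countP_cons, ← lX, seqFlow_cons hp.2.1, add_comm]
    simp only [Pi.add_apply, Finset.sum_add_distrib]
    refine add_le_add ?_ (ih fun q hq => hγ q (List.mem_cons_of_mem p hq))
    split_ifs with h
    · obtain ⟨x, hxp, hxX⟩ : ∃ x ∈ p, x ∈ X := by simpa using h
      have hx : x ∈ p.dropLast := List.mem_dropLast_of_mem_of_ne_getLast? hxp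
        (by rw [hp.2.2.2.1]; exact fun hxz => hz (Option.some_inj.1 hxz ▸ hxX))
      calc 1 ≤ p.dropLast.count x := List.count_pos_iff.2 hx
        _ = ∑ u, chi p x u := (sum_chi_left p x).symm
        _ ≤ ∑ x ∈ X, ∑ u, chi p x u :=
          Finset.single_le_sum (f := fun x => ∑ u, chi p x u) (fun _ _ => Nat.zero_le _) hxX
    · exact Nat.zero_le _

theorem vertexFlow_nonneg {f : V → V → ℕ} {y : V} (hv : 0 ≤ flowValue f y) (z x : V) :
    0 ≤ vertexFlow f y z x := by
  unfold vertexFlow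
  split_ifs
  exacts [hv, by positivity]

theorem lX_le_sum_vertexFlow {N : Network V} {y z : V} {X : Finset V} {γ : List (List V)}
    {f : V → V → ℕ} (hγ : ∀ p ∈ γ, IsPath N y z p) (hle : seqFlow γ ≤ f)
    (hv : flowValue f y = γ.length) : (lX X γ : ℤ) ≤ ∑ x ∈ X, vertexFlow f y z x := by
  have hnonneg := vertexFlow_nonneg (hv ▸ Nat.cast_nonneg _) z
  by_cases hX : y ∈ X ∨ z ∈ X
  · obtain ⟨w, hwX, hw⟩ : ∃ w ∈ X, vertexFlow f y z w = γ.length := by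
      rcases hX with h | h
      exacts [⟨y, h, by simp [vertexFlow, hv]⟩, ⟨z, h, by simp [vertexFlow, hv]⟩]
    rw [lX_eq_length hγ hX, ← hw]
    exact Finset.single_le_sum (fun x _ => hnonneg x) hwX
  · push Not at hX
    calc (lX X γ : ℤ) ≤ ∑ x ∈ X, ∑ u, (seqFlow γ x u : ℤ) := by
          exact_mod_cast lX_le_sum_seqFlow hγ hX.2
      _ ≤ ∑ x ∈ X, ∑ u, (f x u : ℤ) := by gcongr with x _ u; exact hle x u
      _ = ∑ x ∈ X, vertexFlow f y z x := Finset.sum_congr rfl fun x hx => by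
          simp [vertexFlow, ne_of_mem_of_not_mem hx hX.1, ne_of_mem_of_not_mem hx hX.2]

theorem exists_mem_maxSeqs_lX_eq_lambdaX (N : Network V) {y z : V} (hyz : y ≠ z)
    (X : Finset V) : ∃ γ ∈ MaxSeqs N y z, lX X γ = lambdaX N y z X := by
  obtain ⟨f, hf⟩ := exists_isMaxFlow N y z
  obtain ⟨γ, hγ, -⟩ := hf.exists_mem_maxSeqs hyz
  exact Nat.sInf_mem (s := {n | ∃ γ ∈ MaxSeqs N y z, lX X γ = n}) ⟨_, γ, hγ, rfl⟩

theorem exists_isMaxFlow_sum_vertexFlow_eq_deltaX (N : Network V) (y z : V) (X : Finset V) :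
    ∃ f, IsMaxFlow N y z f ∧ ∑ x ∈ X, vertexFlow f y z x = deltaX N y z X := by
  obtain ⟨f, hf⟩ := exists_isMaxFlow N y z
  have hnonneg : 0 ≤ ∑ x ∈ X, vertexFlow f y z x :=
    Finset.sum_nonneg fun x _ => vertexFlow_nonneg (hf.2 ▸ Nat.cast_nonneg _) z x
  exact Nat.sInf_mem (s := {n : ℕ | ∃ f, IsMaxFlow N y z f ∧ ∑ x ∈ X, vertexFlow f y z x = n})
    ⟨_, f, hf, (Int.toNat_of_nonneg hnonneg).symm⟩

theorem lambdaX_le_deltaX (N : Network V) {y z : V} (hyz : y ≠ z) (X : Finset V) :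
    lambdaX N y z X ≤ deltaX N y z X := by
  obtain ⟨f, hf, hfX⟩ := exists_isMaxFlow_sum_vertexFlow_eq_deltaX N y z X
  obtain ⟨γ, hγ, hle⟩ := hf.exists_mem_maxSeqs hyz
  have hv : flowValue f y = γ.length := by rw [hf.2, hγ.2, maxSeqLen_eq_maxFlowValue N hyz]
  have hlX : (lX X γ : ℤ) ≤ deltaX N y z X := hfX ▸ lX_le_sum_vertexFlow hγ.1.1 hle hv
  calc lambdaX N y z X ≤ lX X γ := Nat.sInf_le ⟨γ, hγ, rfl⟩
    _ ≤ deltaX N y z X := by exact_mod_cast hlX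

end NetFlow

theorem phiDrop_le_lambda_le_min_general {V : Type*} [Fintype V] [DecidableEq V]
    (N : Network V) (y z : V) (hyz : y ≠ z) (X : Finset V) :
    0 ≤ NetFlow.phiDrop N y z X ∧
      NetFlow.phiDrop N y z X ≤ (NetFlow.lambdaX N y z X : ℤ) ∧
      NetFlow.lambdaX N y z X ≤ min (NetFlow.deltaX N y z X) (NetFlow.maxFlowValue N y z) := by
  obtain ⟨γ, ⟨hγ, hlen⟩, hlX⟩ := NetFlow.exists_mem_maxSeqs_lX_eq_lambdaX N hyz X
  rw [NetFlow.maxSeqLen_eq_maxFlowValue N hyz] at hlen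
  have hdrop := hγ.length_le_lX_add hyz X
  have hremove := NetFlow.maxFlowValue_removeVerts_le N X y z
  have hlX_le : NetFlow.lX X γ ≤ γ.length := List.countP_le_length
  unfold NetFlow.phiDrop
  exact ⟨by omega, by omega, le_min (NetFlow.lambdaX_le_deltaX N hyz X) (by omega)⟩

/-- `0 ≤ φ^N_{yz}(X) ≤ λ^N_{yz}(X) ≤ min{δ^N_{yz}(X), φ^N_{yz}}`. -/
theorem phiDrop_le_lambda_le_min {V : Type*} [Fintype V] [DecidableEq V]
    (hV : 2 ≤ Fintype.card V) (N : Network V) (y z : V) (hyz : y ≠ z) (X : Finset V) :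
    0 ≤ NetFlow.phiDrop N y z X ∧
      NetFlow.phiDrop N y z X ≤ (NetFlow.lambdaX N y z X : ℤ) ∧
      NetFlow.lambdaX N y z X ≤ min (NetFlow.deltaX N y z X) (NetFlow.maxFlowValue N y z) :=
  phiDrop_le_lambda_le_min_general N y z hyz X
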